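/- arXiv:2402.17255 — 4 statements merged into one kernel-verified Lean document; each statement's English description precedes it below -/
import Mathlib

section
/- Let c₁, c₂ be positive integers, G a graph, P a path in G from x to y, and 𝓑 a bramble in G of order at least c₁ + c₂ such that V(P) intersects every element of 𝓑. Then P can be partitioned into two edge-disjoint subpaths P₁ (containing x) and P₂ (containing y), sharing exactly one endpoint, such that the subbramble 𝓑₁ of elements of 𝓑 intersecting V(P₁) has order exactly c₁, and the subbramble of 𝓑 consisting of elements not intersecting V(P₁) \ V(P₂) has order at least c₂ + 1 and every such element intersects V(P₂). -/
/-!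
Walk along `P` from `x`, one vertex at a time, and track the order of the subbramble of members
meeting the vertices visited so far. It starts at `0`, ends at the order of `𝓑` (every member
meets `P`), and grows by at most one per vertex, since a hitting set plus the new vertex hits the
new members. So some prefix `P₁` ending at `z` is the first one reaching `c₁`, and the members
meeting `P₁` away from `z` are hit by `c₁ - 1` vertices. A hitting set of the members avoiding
`V(P₁) ∖ V(P₂)`, together with those `c₁ - 1` vertices, hits all of `𝓑`, so it has at least
`c₂ + 1` vertices.
-/

open SimpleGraph

def IsBramble {V : Type*} (G : SimpleGraph V) (B : Set (Set V)) : Prop :=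
  (∀ b ∈ B, (G.induce b).Connected) ∧
    ∀ b ∈ B, ∀ b' ∈ B, (G.induce (b ∪ b')).Connected

def HitsAll {V : Type*} (B : Set (Set V)) (X : Set V) : Prop :=
  ∀ b ∈ B, (b ∩ X).Nonempty

noncomputable def brambleOrder {V : Type*} (B : Set (Set V)) : ℕ :=
  sInf {n | ∃ X : Set V, X.Finite ∧ HitsAll B X ∧ X.ncard = n}

theorem Nat.exists_add_one_eq_of_le_add_one {f : ℕ → ℕ} {c N : ℕ} (h0 : f 0 < c)
    (hN : c ≤ f N) (hstep : ∀ n, f (n + 1) ≤ f n + 1) :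
    ∃ m < N, f m + 1 = c ∧ f (m + 1) = c := by
  have hex : ∃ n, c ≤ f n := ⟨N, hN⟩
  obtain ⟨m, hm⟩ : ∃ m, Nat.find hex = m + 1 :=
    Nat.exists_eq_add_one.mpr (Nat.find_pos hex |>.mpr (by omega))
  have hcross : c ≤ f (m + 1) := hm ▸ Nat.find_spec hex
  have hbefore : ¬ c ≤ f m := Nat.find_min hex (by omega)
  have hmN : Nat.find hex ≤ N := Nat.find_min' hex hN
  have := hstep m
  exact ⟨m, by omega, by omega, by omega⟩

lemma List.setOf_mem_take_add_one_diff_subsingleton {α : Type*} (l : List α) (n : ℕ) :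
    ({v | v ∈ l.take (n + 1)} \ {v | v ∈ l.take n}).Subsingleton := by
  rintro v ⟨hv, hvn⟩ w ⟨hw, hwn⟩
  simp_all [List.take_add_one]

lemma SimpleGraph.Walk.mem_take_support_of_not_mem_support_drop {V : Type*} {G : SimpleGraph V}
    {x y v : V} (p : G.Walk x y) {m : ℕ} (hm : m ≤ p.length) (hv : v ∈ (p.take m).support)
    (hv' : v ∉ (p.drop m).support) : v ∈ p.support.take m := by
  rw [Walk.support_take] at hv
  rw [Walk.drop_support_eq_support_drop_min, min_eq_left hm] at hv'
  have := List.mem_of_mem_take hv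
  rw [← List.take_append_drop m p.support, List.mem_append] at this
  exact this.resolve_right hv'

section BrambleOrder

variable {V : Type*} {B B₁ B₂ : Set (Set V)}

def meeting (B : Set (Set V)) (S : Set V) : Set (Set V) := {b ∈ B | (b ∩ S).Nonempty}

lemma meeting_subset (S : Set V) : meeting B S ⊆ B := Set.sep_subset _ _

lemma hitsAll_meeting (S : Set V) : HitsAll (meeting B S) S := fun _ hb => hb.2

lemma nonempty_of_mem_meeting {S : Set V} {b : Set V} (hb : b ∈ meeting B S) : b.Nonempty :=
  hb.2.mono Set.inter_subset_left

lemma meeting_mono {S T : Set V} (h : S ⊆ T) : meeting B S ⊆ meeting B T :=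
  fun _ hb => ⟨hb.1, hb.2.mono (Set.inter_subset_inter_right _ h)⟩

lemma meeting_union (S T : Set V) : meeting B (S ∪ T) = meeting B S ∪ meeting B T := by
  ext b
  simp only [meeting, Set.inter_union_distrib_left, Set.union_nonempty, Set.mem_union,
    Set.mem_ofPred_eq, and_or_left]

lemma meeting_eq_self {S : Set V} (h : HitsAll B S) : meeting B S = B :=
  Set.Subset.antisymm (meeting_subset S) fun b hb => ⟨hb, h b hb⟩

lemma HitsAll.inter_nonempty_of_not_inter_diff_nonempty {S T : Set V} (h : HitsAll B (S ∪ T))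
    {b : Set V} (hb : b ∈ B) (hbST : ¬ (b ∩ (S \ T)).Nonempty) : (b ∩ T).Nonempty := by
  obtain ⟨v, hvb, hvS | hvT⟩ := h b hb
  · by_cases hvT : v ∈ T
    · exact ⟨v, hvb, hvT⟩
    · exact absurd ⟨v, hvb, hvS, hvT⟩ hbST
  · exact ⟨v, hvb, hvT⟩

lemma HitsAll.mono {S T : Set V} (h : HitsAll B S) (hST : S ⊆ T) : HitsAll B T :=
  fun b hb => (h b hb).mono (Set.inter_subset_inter_right b hST)

lemma brambleOrder_le_ncard {X : Set V} (hX : X.Finite) (h : HitsAll B X) :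
    brambleOrder B ≤ X.ncard :=
  Nat.sInf_le ⟨X, hX, h, rfl⟩

variable [Finite V]

lemma exists_hitsAll_ncard_eq_brambleOrder (hne : ∀ b ∈ B, b.Nonempty) :
    ∃ X : Set V, HitsAll B X ∧ X.ncard = brambleOrder B :=
  have hX : ∃ n, ∃ X : Set V, X.Finite ∧ HitsAll B X ∧ X.ncard = n :=
    ⟨_, Set.univ, Set.toFinite _, fun b hb => by simpa using hne b hb, rfl⟩
  let ⟨X, _, hX⟩ := Nat.sInf_mem hX
  ⟨X, hX⟩

lemma brambleOrder_mono (h : B₁ ⊆ B₂) (hne : ∀ b ∈ B₂, b.Nonempty) :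
    brambleOrder B₁ ≤ brambleOrder B₂ := by
  obtain ⟨X, hX, hcard⟩ := exists_hitsAll_ncard_eq_brambleOrder hne
  exact hcard ▸ brambleOrder_le_ncard (Set.toFinite X) fun b hb => hX b (h hb)

lemma brambleOrder_le_add (h : B ⊆ B₁ ∪ B₂) (hne₁ : ∀ b ∈ B₁, b.Nonempty)
    (hne₂ : ∀ b ∈ B₂, b.Nonempty) : brambleOrder B ≤ brambleOrder B₁ + brambleOrder B₂ := by
  obtain ⟨X₁, hX₁, hcard₁⟩ := exists_hitsAll_ncard_eq_brambleOrder hne₁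
  obtain ⟨X₂, hX₂, hcard₂⟩ := exists_hitsAll_ncard_eq_brambleOrder hne₂
  have hX : HitsAll B (X₁ ∪ X₂) := fun b hb => (h hb).elim
    (fun hb₁ => (hX₁ b hb₁).mono (Set.inter_subset_inter_right _ Set.subset_union_left))
    (fun hb₂ => (hX₂ b hb₂).mono (Set.inter_subset_inter_right _ Set.subset_union_right))
  calc brambleOrder B ≤ (X₁ ∪ X₂).ncard := brambleOrder_le_ncard (Set.toFinite _) hX
    _ ≤ X₁.ncard + X₂.ncard := Set.ncard_union_le X₁ X₂
    _ = brambleOrder B₁ + brambleOrder B₂ := by rw [hcard₁, hcard₂]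

lemma brambleOrder_le_add_meeting (hne : ∀ b ∈ B, b.Nonempty) (A : Set V) :
    brambleOrder B ≤
      brambleOrder {b ∈ B | ¬ (b ∩ A).Nonempty} + brambleOrder (meeting B A) :=
  brambleOrder_le_add (fun _ hb => (em _).elim (fun h => .inr ⟨hb, h⟩) (fun h => .inl ⟨hb, h⟩))
    (fun b hb => hne b hb.1) (fun _ => nonempty_of_mem_meeting)

lemma brambleOrder_meeting_le_add_ncard_diff (S T : Set V) :
    brambleOrder (meeting B S) ≤ brambleOrder (meeting B T) + (S \ T).ncard := by
  have hsplit : meeting B S ⊆ meeting B T ∪ meeting B (S \ T) := by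
    rw [← meeting_union, Set.union_comm]
    exact meeting_mono (Set.subset_sdiff_union S T)
  calc brambleOrder (meeting B S)
      ≤ brambleOrder (meeting B T) + brambleOrder (meeting B (S \ T)) :=
        brambleOrder_le_add hsplit (fun _ => nonempty_of_mem_meeting)
          (fun _ => nonempty_of_mem_meeting)
    _ ≤ brambleOrder (meeting B T) + (S \ T).ncard :=
        Nat.add_le_add_left (brambleOrder_le_ncard (Set.toFinite _) (hitsAll_meeting _)) _

lemma brambleOrder_meeting_take_add_one_le (l : List V) (n : ℕ) :
    brambleOrder (meeting B {v | v ∈ l.take (n + 1)}) ≤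
      brambleOrder (meeting B {v | v ∈ l.take n}) + 1 :=
  (brambleOrder_meeting_le_add_ncard_diff _ _).trans <| Nat.add_le_add_left
    (Set.ncard_le_one_iff_subsingleton.mpr (l.setOf_mem_take_add_one_diff_subsingleton n)) _

end BrambleOrder

theorem path_partition_general {V : Type*} [Finite V] (G : SimpleGraph V)
    (c₁ c₂ : ℕ) (hc₁ : 0 < c₁)
    (x y : V) (p : G.Walk x y)
    (B : Set (Set V)) (hord : c₁ + c₂ ≤ brambleOrder B)
    (hhit : HitsAll B {v | v ∈ p.support}) :
    ∃ (z : V) (p₁ : G.Walk x z) (p₂ : G.Walk z y),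
      p = p₁.append p₂ ∧
      brambleOrder {b ∈ B | ∃ v ∈ b, v ∈ p₁.support} = c₁ ∧
      c₂ + 1 ≤
        brambleOrder {b ∈ B | ¬ ∃ v ∈ b, v ∈ p₁.support ∧ v ∉ p₂.support} ∧
      ∀ b ∈ B, (¬ ∃ v ∈ b, v ∈ p₁.support ∧ v ∉ p₂.support) →
        ∃ v ∈ b, v ∈ p₂.support := by
  set g : ℕ → ℕ := fun n => brambleOrder (meeting B {v | v ∈ p.support.take n})
  have h0 : g 0 < c₁ :=
    (brambleOrder_le_ncard (Set.toFinite _) (hitsAll_meeting _)).trans_lt (by simpa using hc₁)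
  have hN : c₁ ≤ g p.support.length := by
    show c₁ ≤ brambleOrder (meeting B {v | v ∈ p.support.take p.support.length})
    rw [List.take_length, meeting_eq_self hhit]
    omega
  obtain ⟨m, hmN, hm, hm1⟩ := Nat.exists_add_one_eq_of_le_add_one h0 hN
    (brambleOrder_meeting_take_add_one_le p.support)
  have hmlen : m ≤ p.length := by rw [Walk.length_support] at hmN; omega
  have hp : p = (p.take m).append (p.drop m) := (p.append_take_drop_eq m).symm
  replace hhit := hhit.mono fun v hv => ((p.take m).mem_support_append_iff (p.drop m)).mp (hp ▸ hv)
  refine ⟨_, p.take m, p.drop m, hp, by rwa [Walk.support_take], ?_,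
    fun b hb => hhit.inter_nonempty_of_not_inter_diff_nonempty hb⟩
  have hne : ∀ b ∈ B, b.Nonempty := fun b hb => (hhit b hb).mono Set.inter_subset_left
  set A : Set V := {v | v ∈ (p.take m).support ∧ v ∉ (p.drop m).support}
  have hsplit : brambleOrder B ≤
      brambleOrder {b ∈ B | ¬ ∃ v ∈ b, v ∈ (p.take m).support ∧ v ∉ (p.drop m).support} +
        brambleOrder (meeting B A) :=
    brambleOrder_le_add_meeting hne A
  have hA : brambleOrder (meeting B A) ≤ g m :=
    brambleOrder_mono (meeting_mono fun v hv =>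
      p.mem_take_support_of_not_mem_support_drop hmlen hv.1 hv.2) fun _ => nonempty_of_mem_meeting
  omega

/-- Lemma 4.5 (path partition): a path hitting a bramble of order at least
`c₁ + c₂` splits into two edge-disjoint subpaths with the stated bramble
properties. -/
theorem path_partition {V : Type*} [Finite V] (G : SimpleGraph V)
    (c₁ c₂ : ℕ) (hc₁ : 0 < c₁) (hc₂ : 0 < c₂)
    (x y : V) (p : G.Walk x y) (hp : p.IsPath)
    (B : Set (Set V)) (hB : IsBramble G B) (hord : c₁ + c₂ ≤ brambleOrder B)
    (hhit : HitsAll B {v | v ∈ p.support}) :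
    ∃ (z : V) (p₁ : G.Walk x z) (p₂ : G.Walk z y),
      p = p₁.append p₂ ∧
      brambleOrder {b ∈ B | ∃ v ∈ b, v ∈ p₁.support} = c₁ ∧
      c₂ + 1 ≤
        brambleOrder {b ∈ B | ¬ ∃ v ∈ b, v ∈ p₁.support ∧ v ∉ p₂.support} ∧
      ∀ b ∈ B, (¬ ∃ v ∈ b, v ∈ p₁.support ∧ v ∉ p₂.support) →
        ∃ v ∈ b, v ∈ p₂.support :=
  path_partition_general G c₁ c₂ hc₁ x y p B hord hhit
end

section
/- For all integers a, b ≥ 2, the a × b grid graph contains a cycle of length at least ab − 1. More precisely, either the a × b grid has a Hamiltonian cycle, or the graph obtained from it by deleting one corner vertex has a Hamiltonian cycle. -/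
open SimpleGraph

/-- The `a × b` grid graph on `Fin a × Fin b`. -/
def gridGraph (a b : ℕ) : SimpleGraph (Fin a × Fin b) :=
  SimpleGraph.fromRel fun p q =>
    (p.1 = q.1 ∧ p.2.val + 1 = q.2.val) ∨ (p.2 = q.2 ∧ p.1.val + 1 = q.1.val)

/-- The corner vertices of the `a × b` grid. -/
def GridCorner (a b : ℕ) (c : Fin a × Fin b) : Prop :=
  (c.1.val = 0 ∨ c.1.val = a - 1) ∧ (c.2.val = 0 ∨ c.2.val = b - 1)

/-!
If one side is even, say `a`, the grid has a Hamiltonian cycle: snake row by row through the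
columns `1, …, b - 1` and return along column `0`. If both sides are odd, delete the corner
`(a - 1, b - 1)`: snake in the same way through the first `a - 2` rows, cross the last two rows
from right to left by a comb of `2 × 2` blocks, and return along column `0`. The tours are walks
in the grid on `ℕ × ℕ`, where no bounds have to be carried, pulled back along the embedding of
the `a × b` grid. A Hamiltonian cycle of either graph is a cycle of the grid of length at least
`ab - 1`.
-/

namespace SimpleGraph

variable {V W : Type*} [DecidableEq V] {G : SimpleGraph V} {H : SimpleGraph W}

theorem Walk.isHamiltonianCycle_of_length_eq_card [Fintype V] {u : V} (p : G.Walk u u)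
    (h3 : 3 ≤ p.length) (hlen : p.length = Fintype.card V) (hmem : ∀ v, v ∈ p.support) :
    p.IsHamiltonianCycle := by
  have hne : ¬p.Nil := by rw [← Walk.length_eq_zero_iff]; omega
  have htail : p.tail.IsHamiltonian := by
    rw [Walk.isHamiltonian_iff_support_get_bijective, Fintype.bijective_iff_surjective_and_card]
    refine ⟨fun v => ?_, ?_⟩
    · rw [← List.mem_iff_get]
      rcases List.mem_cons.1 (p.cons_support_tail hne ▸ hmem v) with rfl | hv
      · exact p.tail.end_mem_support
      · exact hv
    · rw [Fintype.card_fin, Walk.length_support, Walk.length_tail_add_one hne, hlen]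
  rw [Walk.isHamiltonianCycle_iff_isCycle_and_length_eq]
  exact ⟨Walk.isCycle_iff_isPath_tail_and_le_length.2 ⟨htail.isPath, h3⟩, hlen⟩

theorem Embedding.exists_isHamiltonianCycle_of_walk [Fintype V] (f : G ↪g H) {w : W}
    (p : H.Walk w w) (h3 : 3 ≤ p.length) (hlen : p.length = Fintype.card V)
    (hsupp : ∀ x, x ∈ p.support ↔ x ∈ Set.range f) :
    ∃ (v : V) (q : G.Walk v v), q.IsHamiltonianCycle := by
  classical
  let q := p.induce (Set.range f) fun x => (hsupp x).1
  have hqlen : q.length = p.length :=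
    (Walk.length_map _ q).symm.trans (congrArg Walk.length (p.map_induce _))
  have hq : q.IsHamiltonianCycle := by
    refine q.isHamiltonianCycle_of_length_eq_card ?_ ?_ fun x => ?_
    · rwa [hqlen]
    · rw [hqlen, hlen, Fintype.card_congr (Equiv.ofInjective f f.injective)]
    · simp [q, hsupp]
  exact ⟨_, q.map f.isoInduceRange.symm.toHom, hq.map f.isoInduceRange.symm.bijective⟩

theorem Walk.IsHamiltonianCycle.exists_isCycle_of_induce {s : Set V} [Fintype s] {v : s}
    {p : (G.induce s).Walk v v} (hp : p.IsHamiltonianCycle) :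
    ∃ (u : V) (q : G.Walk u u), q.IsCycle ∧ q.length = Fintype.card s :=
  ⟨v, p.map (Embedding.induce s).toHom, hp.isCycle.map Subtype.val_injective,
    (Walk.length_map _ p).trans hp.length_eq⟩

end SimpleGraph

def natGrid : SimpleGraph (ℕ × ℕ) :=
  SimpleGraph.fromRel fun p q => (p.1 = q.1 ∧ p.2 + 1 = q.2) ∨ (p.2 = q.2 ∧ p.1 + 1 = q.1)

namespace natGrid

theorem adj_mk_iff {i j i' j' : ℕ} : natGrid.Adj (i, j) (i', j') ↔
    (i = i' ∧ (j + 1 = j' ∨ j' + 1 = j)) ∨ (j = j' ∧ (i + 1 = i' ∨ i' + 1 = i)) := by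
  simp only [natGrid, fromRel_adj, ne_eq, Prod.ext_iff]
  omega

def rowWalk (i j : ℕ) : (n : ℕ) → natGrid.Walk (i, j) (i, j + n)
  | 0 => .nil
  | n + 1 => (rowWalk i j n).concat (adj_mk_iff.2 (by omega))

def colWalk (j : ℕ) : (n : ℕ) → natGrid.Walk (0, j) (n, j)
  | 0 => .nil
  | n + 1 => (colWalk j n).concat (adj_mk_iff.2 (by omega))

def doubleRowWalk (i j n : ℕ) : natGrid.Walk (i, j) (i + 1, j) :=
  (rowWalk i j n).append (.cons (adj_mk_iff.2 (by omega)) (rowWalk (i + 1) j n).reverse)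

def snakeWalk (j n : ℕ) : (k : ℕ) → natGrid.Walk (0, j) (2 * k, j)
  | 0 => .nil
  | k + 1 => (snakeWalk j n k).append
      ((doubleRowWalk (2 * k) j n).concat (adj_mk_iff.2 (by omega)))

def combWalk (i : ℕ) : (m : ℕ) → natGrid.Walk (i, 2 * m) (i, 0)
  | 0 => .nil
  | m + 1 =>
    .cons (v := (i, 2 * m + 1)) (adj_mk_iff.2 (by omega)) <|
    .cons (v := (i + 1, 2 * m + 1)) (adj_mk_iff.2 (by omega)) <|
    .cons (v := (i + 1, 2 * m)) (adj_mk_iff.2 (by omega)) <|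
    .cons (adj_mk_iff.2 (by omega)) (combWalk i m)

variable {x : ℕ × ℕ}

theorem mem_support_rowWalk {i j n : ℕ} :
    x ∈ (rowWalk i j n).support ↔ x.1 = i ∧ j ≤ x.2 ∧ x.2 ≤ j + n := by
  induction n with
  | zero => simp only [rowWalk, Walk.support_nil, List.mem_singleton, Prod.ext_iff]; omega
  | succ n ih =>
    simp only [rowWalk, Walk.support_concat, List.mem_append, ih, List.mem_singleton, Prod.ext_iff]
    omega

theorem mem_support_colWalk {j n : ℕ} : x ∈ (colWalk j n).support ↔ x.1 ≤ n ∧ x.2 = j := by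
  induction n with
  | zero => simp only [colWalk, Walk.support_nil, List.mem_singleton, Prod.ext_iff]; omega
  | succ n ih =>
    simp only [colWalk, Walk.support_concat, List.mem_append, ih, List.mem_singleton, Prod.ext_iff]
    omega

theorem mem_support_doubleRowWalk {i j n : ℕ} :
    x ∈ (doubleRowWalk i j n).support ↔ i ≤ x.1 ∧ x.1 ≤ i + 1 ∧ j ≤ x.2 ∧ x.2 ≤ j + n := by
  simp only [doubleRowWalk, Walk.mem_support_append_iff, Walk.support_cons, List.mem_cons,
    Walk.support_reverse, List.mem_reverse, mem_support_rowWalk, Prod.ext_iff]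
  omega

theorem mem_support_snakeWalk {j n k : ℕ} : x ∈ (snakeWalk j n k).support ↔
    (x.1 < 2 * k ∧ j ≤ x.2 ∧ x.2 ≤ j + n) ∨ (x.1 = 2 * k ∧ x.2 = j) := by
  induction k with
  | zero => simp [snakeWalk, Prod.ext_iff]
  | succ k ih =>
    simp only [snakeWalk, Walk.mem_support_append_iff, Walk.support_concat,
      List.mem_append, List.mem_singleton, mem_support_doubleRowWalk, ih, Prod.ext_iff]
    omega

theorem mem_support_combWalk {i m : ℕ} : x ∈ (combWalk i m).support ↔
    (x.1 = i ∧ x.2 = 2 * m) ∨ (i ≤ x.1 ∧ x.1 ≤ i + 1 ∧ x.2 < 2 * m) := by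
  induction m with
  | zero => simp [combWalk, Prod.ext_iff]
  | succ m ih =>
    simp only [combWalk, Walk.support_cons, List.mem_cons, ih, Prod.ext_iff]
    omega

@[simp] theorem length_rowWalk {i j n : ℕ} : (rowWalk i j n).length = n := by
  induction n <;> simp [rowWalk, *]

@[simp] theorem length_colWalk {j n : ℕ} : (colWalk j n).length = n := by
  induction n <;> simp [colWalk, *]

@[simp] theorem length_doubleRowWalk {i j n : ℕ} :
    (doubleRowWalk i j n).length = 2 * n + 1 := by
  simp only [doubleRowWalk, Walk.length_append, Walk.length_cons, Walk.length_reverse,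
    length_rowWalk]
  omega

@[simp] theorem length_snakeWalk {j n k : ℕ} : (snakeWalk j n k).length = k * (2 * n + 2) := by
  induction k with
  | zero => simp [snakeWalk]
  | succ k ih =>
    simp only [snakeWalk, Walk.length_append, Walk.length_concat, length_doubleRowWalk, ih]
    ring

@[simp] theorem length_combWalk {i m : ℕ} : (combWalk i m).length = 4 * m := by
  induction m with
  | zero => simp [combWalk]
  | succ m ih => simp only [combWalk, Walk.length_cons, ih]; omega

def evenTour (k n : ℕ) : natGrid.Walk (0, 0) (0, 0) :=
  .cons (adj_mk_iff.2 (by omega)) <| (snakeWalk 1 n k).append <|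
    (doubleRowWalk (2 * k) 1 n).append <|
    .cons (adj_mk_iff.2 (by omega)) (colWalk 0 (2 * k + 1)).reverse

def oddTour (k m : ℕ) : natGrid.Walk (0, 0) (0, 0) :=
  .cons (adj_mk_iff.2 (by omega)) <| (snakeWalk 1 (2 * m + 1) k).append <|
    (rowWalk (2 * k) 1 (2 * m + 1)).append <| .cons (adj_mk_iff.2 (by omega)) <|
    (combWalk (2 * k + 1) (m + 1)).append <|
    .cons (adj_mk_iff.2 (by omega)) (colWalk 0 (2 * k)).reverse

theorem length_evenTour (k n : ℕ) : (evenTour k n).length = (2 * k + 2) * (n + 2) := by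
  simp only [evenTour, Walk.length_cons, Walk.length_append, Walk.length_reverse,
    length_snakeWalk, length_doubleRowWalk, length_colWalk]
  ring

theorem mem_support_evenTour {k n : ℕ} :
    x ∈ (evenTour k n).support ↔ x.1 < 2 * k + 2 ∧ x.2 < n + 2 := by
  simp only [evenTour, Walk.support_cons, List.mem_cons, Walk.mem_support_append_iff,
    Walk.support_reverse, List.mem_reverse, mem_support_snakeWalk, mem_support_doubleRowWalk,
    mem_support_colWalk, Prod.ext_iff]
  omega

theorem length_oddTour (k m : ℕ) : (oddTour k m).length = (2 * k + 3) * (2 * m + 3) - 1 := by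
  simp only [oddTour, Walk.length_cons, Walk.length_append, Walk.length_reverse,
    length_snakeWalk, length_rowWalk, length_combWalk, length_colWalk]
  ring_nf
  omega

theorem mem_support_oddTour {k m : ℕ} : x ∈ (oddTour k m).support ↔
    x.1 < 2 * k + 3 ∧ x.2 < 2 * m + 3 ∧ x ≠ (2 * k + 2, 2 * m + 2) := by
  simp only [oddTour, Walk.support_cons, List.mem_cons, Walk.mem_support_append_iff,
    Walk.support_reverse, List.mem_reverse, mem_support_snakeWalk, mem_support_rowWalk,
    mem_support_combWalk, mem_support_colWalk, ne_eq, Prod.ext_iff]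
  omega

end natGrid

def gridGraphSwapIso (a b : ℕ) : gridGraph a b ≃g gridGraph b a where
  toEquiv := Equiv.prodComm _ _
  map_rel_iff' := by simp only [gridGraph, fromRel_adj]; aesop

def gridEmbedding (a b : ℕ) : gridGraph a b ↪g natGrid where
  toFun x := (x.1.val, x.2.val)
  inj' x y h := by simpa [Prod.ext_iff, Fin.ext_iff] using h
  map_rel_iff' {x y} := by
    change natGrid.Adj (_, _) (_, _) ↔ _
    simp only [natGrid.adj_mk_iff, gridGraph, fromRel_adj, ne_eq, Prod.ext_iff, Fin.ext_iff]
    omega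

@[simp] theorem gridEmbedding_apply {a b : ℕ} (x : Fin a × Fin b) :
    gridEmbedding a b x = (x.1.val, x.2.val) := rfl

theorem mem_range_gridEmbedding {a b : ℕ} {x : ℕ × ℕ} :
    x ∈ Set.range (gridEmbedding a b) ↔ x.1 < a ∧ x.2 < b :=
  ⟨by rintro ⟨y, rfl⟩; exact ⟨y.1.2, y.2.2⟩, fun h => ⟨(⟨x.1, h.1⟩, ⟨x.2, h.2⟩), rfl⟩⟩

theorem gridGraph_exists_isHamiltonianCycle_of_even {a b : ℕ} (ha : Even a) (ha2 : 2 ≤ a)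
    (hb : 2 ≤ b) : ∃ (v : Fin a × Fin b) (p : (gridGraph a b).Walk v v), p.IsHamiltonianCycle := by
  obtain ⟨k, rfl⟩ : ∃ k, a = 2 * k + 2 := by obtain ⟨r, rfl⟩ := ha; exact ⟨r - 1, by omega⟩
  obtain ⟨n, rfl⟩ : ∃ n, b = n + 2 := ⟨b - 2, by omega⟩
  refine (gridEmbedding _ _).exists_isHamiltonianCycle_of_walk (natGrid.evenTour k n)
    ?_ (by simp [natGrid.length_evenTour]) fun x => ?_
  · rw [natGrid.length_evenTour]; nlinarith
  · rw [natGrid.mem_support_evenTour, mem_range_gridEmbedding]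

theorem gridGraph_exists_isHamiltonianCycle_induce_compl_corner_of_odd {a b : ℕ} (ha : Odd a)
    (hb : Odd b) (ha2 : 2 ≤ a) (hb2 : 2 ≤ b) :
    ∃ c : Fin a × Fin b, GridCorner a b c ∧
      ∃ (v : {x : Fin a × Fin b // x ∈ ({c}ᶜ : Set (Fin a × Fin b))})
        (p : ((gridGraph a b).induce ({c}ᶜ : Set (Fin a × Fin b))).Walk v v),
        p.IsHamiltonianCycle := by
  obtain ⟨k, rfl⟩ : ∃ k, a = 2 * k + 3 := by obtain ⟨r, rfl⟩ := ha; exact ⟨r - 1, by omega⟩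
  obtain ⟨m, rfl⟩ : ∃ m, b = 2 * m + 3 := by obtain ⟨r, rfl⟩ := hb; exact ⟨r - 1, by omega⟩
  refine ⟨(Fin.last _, Fin.last _), ⟨Or.inr rfl, Or.inr rfl⟩, ?_⟩
  refine Embedding.exists_isHamiltonianCycle_of_walk
    ((Embedding.induce _).trans (gridEmbedding _ _)) (natGrid.oddTour k m) ?_ ?_ fun x => ?_
  · have := Nat.mul_le_mul (show 3 ≤ 2 * k + 3 by omega) (show 3 ≤ 2 * m + 3 by omega)
    rw [natGrid.length_oddTour]; omega
  · simp [natGrid.length_oddTour, Fintype.card_subtype_compl]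
  · rw [natGrid.mem_support_oddTour]
    constructor
    · rintro ⟨h1, h2, hne⟩
      refine ⟨⟨(⟨x.1, h1⟩, ⟨x.2, h2⟩), ?_⟩, rfl⟩
      simpa [Prod.ext_iff, Fin.ext_iff] using hne
    · rintro ⟨⟨y, hy⟩, rfl⟩
      simpa [Prod.ext_iff, Fin.ext_iff] using hy

theorem gridGraph_exists_isHamiltonianCycle_or_induce_compl_corner {a b : ℕ} (ha : 2 ≤ a)
    (hb : 2 ≤ b) :
    (∃ (v : Fin a × Fin b) (p : (gridGraph a b).Walk v v), p.IsHamiltonianCycle) ∨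
      ∃ c : Fin a × Fin b, GridCorner a b c ∧
        ∃ (v : {x : Fin a × Fin b // x ∈ ({c}ᶜ : Set (Fin a × Fin b))})
          (p : ((gridGraph a b).induce ({c}ᶜ : Set (Fin a × Fin b))).Walk v v),
          p.IsHamiltonianCycle := by
  rcases Nat.even_or_odd a with hae | hao
  · exact Or.inl (gridGraph_exists_isHamiltonianCycle_of_even hae ha hb)
  rcases Nat.even_or_odd b with hbe | hbo
  · obtain ⟨v, p, hp⟩ := gridGraph_exists_isHamiltonianCycle_of_even hbe hb ha
    let e := gridGraphSwapIso b a
    exact Or.inl ⟨_, p.map e.toHom, hp.map e.bijective⟩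
  · exact Or.inr (gridGraph_exists_isHamiltonianCycle_induce_compl_corner_of_odd hao hbo ha hb)

theorem grid_long_cycle (a b : ℕ) (ha : 2 ≤ a) (hb : 2 ≤ b) :
    (∃ (v : Fin a × Fin b) (p : (gridGraph a b).Walk v v),
      p.IsCycle ∧ a * b - 1 ≤ p.length) ∧
    ((∃ (v : Fin a × Fin b) (p : (gridGraph a b).Walk v v),
        p.IsHamiltonianCycle) ∨
      ∃ c : Fin a × Fin b, GridCorner a b c ∧
        ∃ (v : {x : Fin a × Fin b // x ∈ ({c}ᶜ : Set (Fin a × Fin b))})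
          (p : ((gridGraph a b).induce ({c}ᶜ : Set (Fin a × Fin b))).Walk v v),
          p.IsHamiltonianCycle) := by
  have hham := gridGraph_exists_isHamiltonianCycle_or_induce_compl_corner ha hb
  refine ⟨?_, hham⟩
  rcases hham with ⟨v, p, hp⟩ | ⟨c, -, v, p, hp⟩
  · exact ⟨v, p, hp.isCycle, by simp [hp.length_eq]⟩
  · obtain ⟨u, q, hq, hlen⟩ := hp.exists_isCycle_of_induce
    exact ⟨u, q, hq, by rw [hlen, Fintype.card_compl_set]; simp⟩
end

section
/- Every twisted ℓ-prism contains the wheel graph on ℓ + 1 vertices as a minor. -/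
open SimpleGraph

def IsMinor {W V : Type*} (H : SimpleGraph W) (G : SimpleGraph V) : Prop :=
  ∃ f : W → Set V,
    (∀ w, (f w).Nonempty ∧ (G.induce (f w)).Connected) ∧
    (∀ w w', w ≠ w' → Disjoint (f w) (f w')) ∧
    (∀ w w', H.Adj w w' → ∃ u ∈ f w, ∃ v ∈ f w', G.Adj u v)

/-- The twisted `ℓ`-prism determined by a permutation `π`: two disjoint cycles
of length `ℓ` joined by the perfect matching `(0, i) — (1, π i)`. -/
def twistedPrism (ℓ : ℕ) (π : Equiv.Perm (Fin ℓ)) : SimpleGraph (Fin 2 × Fin ℓ) :=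
  SimpleGraph.fromRel fun p q =>
    (p.1 = q.1 ∧ (cycleGraph ℓ).Adj p.2 q.2) ∨
    (p.1 = 0 ∧ q.1 = 1 ∧ q.2 = π p.2)

/-- The wheel graph with a cycle of length `k` plus a hub (so `k + 1` vertices):
the hub `none` is adjacent to every cycle vertex. -/
def wheelGraph (k : ℕ) : SimpleGraph (Option (Fin k)) :=
  SimpleGraph.fromRel fun p q =>
    (p = none ∧ q ≠ none) ∨
    (∃ i j, p = some i ∧ q = some j ∧ (cycleGraph k).Adj i j)

/-
Contract the second cycle of the prism to a single vertex, the hub. Each vertex `(0, i)` of the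
first cycle keeps its cycle edges and is joined to the hub through the matching edge
`(0, i) — (1, π i)`, so the contraction contains the wheel.
-/

theorem IsMinor.of_connected_fibers {W V : Type*} {H : SimpleGraph W} {G : SimpleGraph V}
    (φ : V → W) (hconn : ∀ w, (G.induce (φ ⁻¹' {w})).Connected)
    (hadj : ∀ w w', H.Adj w w' → ∃ u v, φ u = w ∧ φ v = w' ∧ G.Adj u v) : IsMinor H G := by
  refine ⟨fun w => φ ⁻¹' {w}, fun w => ⟨?_, hconn w⟩, fun w w' hne => ?_, fun w w' h => ?_⟩
  · obtain ⟨⟨v, hv⟩⟩ := (hconn w).nonempty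
    exact ⟨v, hv⟩
  · exact (Set.disjoint_singleton.mpr hne).preimage φ
  · obtain ⟨u, v, rfl, rfl, huv⟩ := hadj w w' h
    exact ⟨u, rfl, v, rfl, huv⟩

theorem connected_induce_singleton {V : Type*} (G : SimpleGraph V) (v : V) :
    (G.induce {v}).Connected := by
  rw [induce_singleton_eq_top]
  exact connected_top

section TwistedPrism

variable {ℓ : ℕ} (π : Equiv.Perm (Fin ℓ))

theorem twistedPrism_adj_of_cycleGraph_adj (c : Fin 2) {i j : Fin ℓ}
    (h : (cycleGraph ℓ).Adj i j) : (twistedPrism ℓ π).Adj (c, i) (c, j) := by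
  rw [twistedPrism, fromRel_adj]
  exact ⟨by simp [h.ne], Or.inl (Or.inl ⟨rfl, h⟩)⟩

theorem twistedPrism_adj_matching (i : Fin ℓ) : (twistedPrism ℓ π).Adj (0, i) (1, π i) := by
  rw [twistedPrism, fromRel_adj]
  exact ⟨by simp, Or.inl (Or.inr ⟨rfl, rfl, rfl⟩)⟩

theorem twistedPrism_induce_cycle_connected (hℓ : ℓ ≠ 0) (c : Fin 2) :
    ((twistedPrism ℓ π).induce {p | p.1 = c}).Connected := by
  obtain ⟨m, rfl⟩ := Nat.exists_eq_succ_of_ne_zero hℓ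
  let embedCycle : cycleGraph (m + 1) →g (twistedPrism (m + 1) π).induce {p | p.1 = c} :=
    ⟨fun j => ⟨(c, j), rfl⟩, fun h => twistedPrism_adj_of_cycleGraph_adj π c h⟩
  refine cycleGraph_connected.map embedCycle ?_
  rintro ⟨⟨c, j⟩, rfl⟩
  exact ⟨j, rfl⟩

end TwistedPrism

section Contraction

variable {ℓ : ℕ}

def contractSecondCycle (p : Fin 2 × Fin ℓ) : Option (Fin ℓ) :=
  if p.1 = 0 then some p.2 else none

theorem contractSecondCycle_preimage_some (i : Fin ℓ) :
    contractSecondCycle ⁻¹' {some i} = {(0, i)} := by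
  ext ⟨c, j⟩
  fin_cases c <;> simp [contractSecondCycle, eq_comm]

theorem contractSecondCycle_preimage_none :
    contractSecondCycle ⁻¹' {none} = {p : Fin 2 × Fin ℓ | p.1 = 1} := by
  ext ⟨c, j⟩
  fin_cases c <;> simp [contractSecondCycle]

variable (π : Equiv.Perm (Fin ℓ))

theorem twistedPrism_induce_contractSecondCycle_fiber_connected (hℓ : ℓ ≠ 0)
    (w : Option (Fin ℓ)) :
    ((twistedPrism ℓ π).induce (contractSecondCycle ⁻¹' {w})).Connected := by
  cases w with
  | none =>
    rw [contractSecondCycle_preimage_none]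
    exact twistedPrism_induce_cycle_connected π hℓ 1
  | some i =>
    rw [contractSecondCycle_preimage_some]
    exact connected_induce_singleton _ _

theorem exists_twistedPrism_adj_of_wheelGraph_adj {w w' : Option (Fin ℓ)}
    (h : (wheelGraph ℓ).Adj w w') : ∃ u v, contractSecondCycle u = w ∧
      contractSecondCycle v = w' ∧ (twistedPrism ℓ π).Adj u v := by
  have lift : ∀ w w' : Option (Fin ℓ), (w = none ∧ w' ≠ none) ∨
      (∃ i j, w = some i ∧ w' = some j ∧ (cycleGraph ℓ).Adj i j) →
      ∃ u v, contractSecondCycle u = w ∧ contractSecondCycle v = w' ∧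
        (twistedPrism ℓ π).Adj u v := by
    rintro w w' (⟨rfl, hw'⟩ | ⟨i, j, rfl, rfl, hij⟩)
    · obtain ⟨i, rfl⟩ := Option.ne_none_iff_exists'.mp hw'
      exact ⟨(1, π i), (0, i), rfl, rfl, (twistedPrism_adj_matching π i).symm⟩
    · exact ⟨(0, i), (0, j), rfl, rfl, twistedPrism_adj_of_cycleGraph_adj π 0 hij⟩
  rw [wheelGraph, fromRel_adj] at h
  rcases h.2 with h | h
  · exact lift w w' h
  · obtain ⟨u, v, hu, hv, huv⟩ := lift w' w h
    exact ⟨v, u, hv, hu, huv.symm⟩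

end Contraction

theorem twistedPrism_contains_wheel (ℓ : ℕ) (hℓ : 3 ≤ ℓ)
    (π : Equiv.Perm (Fin ℓ)) :
    IsMinor (wheelGraph ℓ) (twistedPrism ℓ π) :=
  IsMinor.of_connected_fibers contractSecondCycle
    (twistedPrism_induce_contractSecondCycle_fiber_connected π (by omega))
    (fun _ _ => exists_twistedPrism_adj_of_wheelGraph_adj π)
end

section
/- Let G be a connected graph with maximum degree at most 3 and with |E(G)| − |V(G)| = m − 1 for some positive integer m. Then every set of vertices that intersects all cycles of G has size at least m/2. -/
/-!
Removing a feedback vertex set `X` leaves a forest, which has fewer edges than vertices as long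
as it is nonempty. Each vertex of `X` carries at most three edges, so
`|E| ≤ |E(G - X)| + 3|X| < |V| - |X| + 3|X|`, i.e. `m - 1 = |E| - |V| < 2|X|`.
If `X` is all of `V` the forest is empty and this fails by one; the handshake bound
`2|E| ≤ 3|V|` then gives `m ≤ |V|/2 + 1 ≤ 2|V|`, using that `V` is nonempty.
-/

open SimpleGraph Finset

namespace SimpleGraph

variable {V : Type*} {G : SimpleGraph V}

def IsFeedbackVertexSet (G : SimpleGraph V) (X : Set V) : Prop :=
  ∀ (v : V) (p : G.Walk v v), p.IsCycle → ∃ u ∈ X, u ∈ p.support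

lemma IsFeedbackVertexSet.isAcyclic_induce_compl {X : Set V} (hX : G.IsFeedbackVertexSet X) :
    (G.induce Xᶜ).IsAcyclic := by
  intro v p hp
  obtain ⟨u, huX, hu⟩ := hX _ (p.map (Embedding.induce Xᶜ).toHom)
    ((Walk.isCycle_map_iff_of_injective Subtype.val_injective).mpr hp)
  rw [Walk.support_map, List.mem_map] at hu
  obtain ⟨w, -, rfl⟩ := hu
  exact w.2 huX

lemma IsAcyclic.card_edgeFinset_lt_card [Fintype V] [Nonempty V] [Fintype G.edgeSet]
    (hG : G.IsAcyclic) : #G.edgeFinset < Fintype.card V := by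
  classical
  obtain ⟨T, hGT, -, hT⟩ := connected_top.exists_isTree_le_of_le_of_isAcyclic le_top hG
  calc #G.edgeFinset ≤ #T.edgeFinset := card_le_card (edgeFinset_mono hGT)
    _ < Fintype.card V := by have := hT.card_edgeFinset; omega

lemma card_edgeFinset_le_card_edgeFinset_induce_compl_add_sum_degree [Fintype V]
    [DecidableEq V] [DecidableRel G.Adj] (s : Set V) [DecidablePred (· ∈ s)] :
    #G.edgeFinset ≤ #(G.induce sᶜ).edgeFinset + ∑ v ∈ s.toFinset, G.degree v := by
  have hcover : G.edgeFinset ⊆ G.edgeFinset ∩ (sᶜ).toFinset.sym2 ∪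
      s.toFinset.biUnion fun v => G.incidenceFinset v := by
    intro e he
    induction e using Sym2.ind with | _ a b =>
    by_cases ha : a ∈ s
    · exact mem_union_right _ (mem_biUnion.mpr ⟨a, by simpa using ha,
        (mem_incidenceFinset ..).mpr ⟨mem_edgeFinset.mp he, Sym2.mem_mk_left a b⟩⟩)
    by_cases hb : b ∈ s
    · exact mem_union_right _ (mem_biUnion.mpr ⟨b, by simpa using hb,
        (mem_incidenceFinset ..).mpr ⟨mem_edgeFinset.mp he, Sym2.mem_mk_right a b⟩⟩)
    exact mem_union_left _ (mem_inter.mpr ⟨he, by simp [ha, hb]⟩)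
  calc #G.edgeFinset
      ≤ #(G.edgeFinset ∩ (sᶜ).toFinset.sym2) +
          #(s.toFinset.biUnion fun v => G.incidenceFinset v) :=
        (card_le_card hcover).trans (card_union_le _ _)
    _ ≤ #(G.induce sᶜ).edgeFinset + ∑ v ∈ s.toFinset, G.degree v := by
      rw [← map_edgeFinset_induce, card_map]
      gcongr
      exact card_biUnion_le.trans_eq (sum_congr rfl fun v _ => G.card_incidenceFinset_eq_degree v)

lemma two_mul_card_edgeFinset_le_of_degree_le [Fintype V] [DecidableRel G.Adj] {k : ℕ}
    (hk : ∀ v, G.degree v ≤ k) : 2 * #G.edgeFinset ≤ k * Fintype.card V := by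
  rw [← sum_degrees_eq_twice_card_edges]
  simpa [mul_comm k] using sum_le_sum fun v (_ : v ∈ univ) => hk v

end SimpleGraph

theorem feedback_set_lower_bound_general {V : Type*} [Fintype V] (G : SimpleGraph V)
    (hconn : G.Connected) (hdeg : ∀ v : V, {u | G.Adj v u}.ncard ≤ 3)
    (m : ℕ) (hcount : G.edgeSet.ncard + 1 = Fintype.card V + m)
    (X : Set V)
    (hX : ∀ (v : V) (p : G.Walk v v), p.IsCycle → ∃ u ∈ X, u ∈ p.support) :
    m ≤ 2 * X.ncard := by
  classical
  have hdeg' : ∀ v, G.degree v ≤ 3 := fun v => by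
    rw [← card_neighborSet_eq_degree, ← Nat.card_eq_fintype_card, Nat.card_coe_set_eq]
    exact hdeg v
  rw [← coe_edgeFinset, Set.ncard_coe_finset] at hcount
  rw [Set.ncard_eq_toFinset_card']
  have hV : 0 < Fintype.card V := Fintype.card_pos_iff.mpr hconn.nonempty
  obtain hXc_empty | hXc_nonempty := isEmpty_or_nonempty (Xᶜ : Set V)
  · have hXV : #X.toFinset = Fintype.card V := by
      rw [Set.isEmpty_coe_sort, Set.compl_empty_iff] at hXc_empty
      simp [hXc_empty]
    have := two_mul_card_edgeFinset_le_of_degree_le hdeg'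
    omega
  · have hE := card_edgeFinset_le_card_edgeFinset_induce_compl_add_sum_degree (G := G) X
    have hF := (IsFeedbackVertexSet.isAcyclic_induce_compl hX).card_edgeFinset_lt_card
    have hsum : ∑ v ∈ X.toFinset, G.degree v ≤ 3 * #X.toFinset := by
      simpa [mul_comm 3] using sum_le_sum fun v (_ : v ∈ X.toFinset) => hdeg' v
    have hcard : Fintype.card ↥Xᶜ + #X.toFinset = Fintype.card V := by
      rw [← Set.toFinset_card, Set.toFinset_compl, card_compl_add_card]
    omega

/-- Counting argument: if `G` is connected with maximum degree at most `3` and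
`|E(G)| − |V(G)| = m − 1` with `m ≥ 1`, then every set of vertices meeting all
cycles of `G` has at least `m/2` vertices. -/
theorem feedback_set_lower_bound {V : Type*} [Fintype V] (G : SimpleGraph V)
    (hconn : G.Connected) (hdeg : ∀ v : V, {u | G.Adj v u}.ncard ≤ 3)
    (m : ℕ) (hm : 1 ≤ m) (hcount : G.edgeSet.ncard + 1 = Fintype.card V + m)
    (X : Set V)
    (hX : ∀ (v : V) (p : G.Walk v v), p.IsCycle → ∃ u ∈ X, u ∈ p.support) :
    m ≤ 2 * X.ncard :=
  feedback_set_lower_bound_general G hconn hdeg m hcount X hX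
end
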